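/- arXiv:1404.7660 — 2 statements merged into one kernel-verified Lean document; each statement's English description precedes it below -/
import Mathlib

section
/- Let f : I ⊆ ℝ → ℝ be differentiable on I° with f' integrable on [a,b] ⊆ I°, a < b, let q ≥ 1, let α ∈ [0,1), and suppose |f'|^q is a P-function on [a,b]. Then ∫_0^{1-α} |f'(t b + (1-t) a)|^q dt ≤ (1-α)[|f'((1-α) b + α a)|^q + |f'(a)|^q]. -/
open MeasureTheory Set Real

/-- `g` is a `P`-function on the set `s`: it is nonnegative on `s` and
`g (t*x + (1-t)*y) ≤ g x + g y` for all `x, y ∈ s` and `t ∈ [0,1]`. -/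
def IsPFunctionOn (g : ℝ → ℝ) (s : Set ℝ) : Prop :=
  (∀ x ∈ s, 0 ≤ g x) ∧
    ∀ x ∈ s, ∀ y ∈ s, ∀ t ∈ Set.Icc (0:ℝ) 1, g (t * x + (1 - t) * y) ≤ g x + g y

theorem stmt_18 (I : Set ℝ) (hI : Convex ℝ I) (f f' : ℝ → ℝ)
    (a b : ℝ) (ha : a ∈ interior I) (hb : b ∈ interior I) (hab : a < b)
    (hdf : ∀ x ∈ interior I, HasDerivAt f (f' x) x)
    (hint : IntervalIntegrable f' MeasureTheory.volume a b)
    (q : ℝ) (hq : 1 ≤ q)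
    (hP : IsPFunctionOn (fun x => |f' x| ^ q) (Set.Icc a b))
    (α : ℝ) (hα : α ∈ Set.Ico (0:ℝ) 1) :
    (∫ t in (0:ℝ)..(1 - α), |f' (t * b + (1 - t) * a)| ^ q)
      ≤ (1 - α) * (|f' ((1 - α) * b + α * a)| ^ q + |f' a| ^ q) := by
  obtain ⟨hα0, hα1⟩ := hα
  have h1α : (0:ℝ) < 1 - α := by linarith
  set x := (1 - α) * b + α * a with hx
  have hxmem : x ∈ Set.Icc a b := by constructor <;> nlinarith
  have hamem : a ∈ Set.Icc a b := ⟨le_refl a, hab.le⟩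
  have hbound : ∀ t ∈ Set.Icc (0:ℝ) (1 - α),
      |f' (t * b + (1 - t) * a)| ^ q ≤ |f' x| ^ q + |f' a| ^ q := by
    rintro t ⟨ht0, ht1⟩
    have hs : t / (1 - α) ∈ Set.Icc (0:ℝ) 1 := by
      constructor
      · positivity
      · rw [div_le_one h1α]; linarith
    have h := hP.2 x hxmem a hamem (t / (1 - α)) hs
    have heq : t / (1 - α) * x + (1 - t / (1 - α)) * a = t * b + (1 - t) * a := by
      rw [hx]; field_simp; ring
    rwa [heq] at h
  by_cases hInt : IntervalIntegrable (fun t => |f' (t * b + (1 - t) * a)| ^ q)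
      volume 0 (1 - α)
  · calc (∫ t in (0:ℝ)..(1 - α), |f' (t * b + (1 - t) * a)| ^ q)
        ≤ ∫ _ in (0:ℝ)..(1 - α), (|f' x| ^ q + |f' a| ^ q) :=
          intervalIntegral.integral_mono_on h1α.le hInt intervalIntegrable_const hbound
      _ = (1 - α) * (|f' x| ^ q + |f' a| ^ q) := by
          simp [intervalIntegral.integral_const]; ring
  · rw [intervalIntegral.integral_undef hInt]
    positivity
end

section
/- Let f : I ⊆ ℝ → ℝ be differentiable on I° with f' integrable on [a,b] ⊆ I°, a < b, let q ≥ 1, let α ∈ (0,1], and suppose |f'|^q is a P-function on [a,b]. Then ∫_{1-α}^1 |f'(t b + (1-t) a)|^q dt ≤ α[|f'((1-α) b + α a)|^q + |f'(b)|^q]. -/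
open MeasureTheory Set Real

theorem stmt_19 (I : Set ℝ) (hI : Convex ℝ I) (f f' : ℝ → ℝ)
    (a b : ℝ) (ha : a ∈ interior I) (hb : b ∈ interior I) (hab : a < b)
    (hdf : ∀ x ∈ interior I, HasDerivAt f (f' x) x)
    (hint : IntervalIntegrable f' MeasureTheory.volume a b)
    (q : ℝ) (hq : 1 ≤ q)
    (hP : IsPFunctionOn (fun x => |f' x| ^ q) (Set.Icc a b))
    (α : ℝ) (hα : α ∈ Set.Ioc (0:ℝ) 1) :
    (∫ t in (1 - α)..(1:ℝ), |f' (t * b + (1 - t) * a)| ^ q)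
      ≤ α * (|f' ((1 - α) * b + α * a)| ^ q + |f' b| ^ q) := by
  obtain ⟨hα0, hα1⟩ := hα
  have hb_mem : b ∈ Set.Icc a b := ⟨hab.le, le_refl b⟩
  have hc_mem : (1 - α) * b + α * a ∈ Set.Icc a b := by
    constructor <;> nlinarith
  have hRHS : 0 ≤ |f' ((1 - α) * b + α * a)| ^ q + |f' b| ^ q := by
    have h1 := hP.1 _ hc_mem
    have h2 := hP.1 _ hb_mem
    simp only at h1 h2
    linarith
  by_cases hInt : IntervalIntegrable
      (fun t => |f' (t * b + (1 - t) * a)| ^ q) volume (1 - α) 1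
  · have hptwise : ∀ t ∈ Set.Icc (1 - α) 1,
        |f' (t * b + (1 - t) * a)| ^ q
          ≤ |f' ((1 - α) * b + α * a)| ^ q + |f' b| ^ q := by
      intro t ht
      set s := (t - (1 - α)) / α with hs_def
      have hsα : s * α = t - (1 - α) := div_mul_cancel₀ _ hα0.ne'
      have hs : s ∈ Set.Icc (0:ℝ) 1 :=
        ⟨div_nonneg (by linarith [ht.1]) hα0.le,
          by rw [div_le_one hα0]; linarith [ht.2]⟩
      have heq : t * b + (1 - t) * a = s * b + (1 - s) * ((1 - α) * b + α * a) := by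
        linear_combination (a - b) * hsα
      rw [heq]
      have := hP.2 b hb_mem ((1 - α) * b + α * a) hc_mem s hs
      simp only at this
      linarith
    have hmono := intervalIntegral.integral_mono_on (by linarith : (1 - α) ≤ (1:ℝ))
      hInt (intervalIntegrable_const) hptwise
    calc (∫ t in (1 - α)..(1:ℝ), |f' (t * b + (1 - t) * a)| ^ q)
        ≤ ∫ _t in (1 - α)..(1:ℝ), (|f' ((1 - α) * b + α * a)| ^ q + |f' b| ^ q) := hmono
      _ = α * (|f' ((1 - α) * b + α * a)| ^ q + |f' b| ^ q) := by
          rw [intervalIntegral.integral_const, smul_eq_mul]; ring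
  · rw [intervalIntegral.integral_undef hInt]
    exact mul_nonneg hα0.le hRHS
end
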